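/- arXiv:math/0611249 — 2 statements merged into one kernel-verified Lean document; each statement's English description precedes it below -/
import Mathlib

section
/- (Runge's theorem) Let K ⊆ ℂ be compact with ℂ ∖ K connected. Then for every function f that is holomorphic on some open neighborhood of K there exists a sequence of holomorphic polynomials (polynomials in z with complex coefficients) converging uniformly on K to f. -/
/-!
Cut `f` off to a compactly supported `C¹` function `g` that agrees with `f` near `K`. By the
Cauchy–Pompeiu formula `g z = -(2π)⁻¹ ∫ ∂̄g(w) / (w - z) dw` (here `∂̄ = ∂ₓ + i ∂ᵧ`), the
restriction of `f` to `K` is a `C(K, ℂ)`-valued integral of the functions `z ↦ ∂̄g(w) / (w - z)`,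
which vanish for `w` near `K` because `f` is holomorphic there. For `w ∉ K` the pole
`z ↦ (w - z)⁻¹` lies in the uniform closure `B` of the polynomials on `K`: the spectrum of `z` in
the Banach algebra `C(K, ℂ)` is `K`, and since `ℂ \ K` is connected, the spectrum of `z` in the
closed subalgebra `B` is still `K`. A closed subspace contains the integrals of functions valued in
it, so `f` lies in `B` on `K`.

The formula itself is checked in polar coordinates `w = z + r e^{iθ}`: there `r ∂̄g(w) / (w - z)`
splits into `∂g/∂r`, which integrates to `-g z` along each ray, and `(i / r) ∂g/∂θ`, which
integrates to `0` around each circle.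
-/

open Filter MeasureTheory Set Topology Metric Complex ComplexConjugate Polynomial
open scoped Real Manifold

theorem integral_mem_of_forall_mem {α E : Type*} [MeasurableSpace α] {μ : Measure α}
    [NormedAddCommGroup E] [NormedSpace ℝ E] [CompleteSpace E] {S : Submodule ℝ E}
    (hS : IsClosed (S : Set E)) {f : α → E} (hf : ∀ x, f x ∈ S) : ∫ x, f x ∂μ ∈ S := by
  by_cases hfi : Integrable f μ
  · rw [← Submodule.Quotient.mk_eq_zero]
    change S.mkQL (∫ x, f x ∂μ) = 0
    rw [← ContinuousLinearMap.integral_comp_comm _ hfi]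
    simp [(Submodule.Quotient.mk_eq_zero S).mpr (hf _)]
  · rw [integral_undef hfi]
    exact S.zero_mem

theorem exists_contDiff_hasCompactSupport_eventuallyEq {E F : Type*} [NormedAddCommGroup E]
    [NormedSpace ℝ E] [FiniteDimensional ℝ E] [NormedAddCommGroup F] [NormedSpace ℝ F]
    {K U : Set E} {f : E → F} {n : ℕ∞}
    (hK : IsCompact K) (hU : IsOpen U) (hKU : K ⊆ U) (hf : ContDiffOn ℝ n f U) :
    ∃ g : E → F, ContDiff ℝ n g ∧ HasCompactSupport g ∧ g =ᶠ[𝓝ˢ K] f := by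
  obtain ⟨V, hV, hKV, hVU, hVc⟩ := exists_open_between_and_isCompact_closure hK hU hKU
  obtain ⟨χ, hχ1, hχ0, -⟩ := exists_contMDiffMap_one_nhds_of_subset_interior 𝓘(ℝ, E) (n := n)
    hK.isClosed (hKV.trans (interior_maximal subset_closure hV))
  have hχ : ContDiff ℝ n χ := contMDiff_iff_contDiff.mp χ.contMDiff
  refine ⟨fun x => χ x • f x, ?_, ?_, ?_⟩
  · refine contDiff_iff_contDiffAt.mpr fun x => ?_
    by_cases hx : x ∈ U
    · exact hχ.contDiffAt.smul (hf.contDiffAt (hU.mem_nhds hx))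
    · refine (contDiffAt_const (c := (0 : F))).congr_of_eventuallyEq ?_
      filter_upwards [isClosed_closure.isOpen_compl.mem_nhds fun h => hx (hVU h)] with y hy
      simp [hχ0 y hy]
  · exact HasCompactSupport.intro hVc fun x hx => by simp [hχ0 x hx]
  · filter_upwards [hχ1] with x hx
    simp [hx]

/-- `dbar g = ∂g/∂x + i ∂g/∂y` is twice the Wirtinger derivative `∂g/∂z̄`. -/
noncomputable def dbar (g : ℂ → ℂ) (w : ℂ) : ℂ :=
  fderiv ℝ g w 1 + I * fderiv ℝ g w I

theorem dbar_eq_zero_of_differentiableAt {g : ℂ → ℂ} {w : ℂ} (h : DifferentiableAt ℂ g w) :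
    dbar g w = 0 := by
  have hI : fderiv ℂ g w I = I * fderiv ℂ g w 1 := by
    rw [← smul_eq_mul, ← (fderiv ℂ g w).map_smul, smul_eq_mul, mul_one]
  simp only [dbar, h.fderiv_restrictScalars ℝ, ContinuousLinearMap.coe_restrictScalars', hI]
  linear_combination fderiv ℂ g w 1 * I_sq

theorem dbar_comp_const_add (g : ℂ → ℂ) (z w : ℂ) :
    dbar (fun w => g (z + w)) w = dbar g (z + w) := by
  simp [dbar, fderiv_comp_add_left]

theorem ContinuousLinearMap.apply_add_I_mul_apply_I_mul (L : ℂ →L[ℝ] ℂ) (c : ℂ) :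
    L c + I * L (I * c) = conj c * (L 1 + I * L I) := by
  obtain ⟨a, b, rfl⟩ : ∃ a b : ℝ, c = a • (1 : ℂ) + b • I :=
    ⟨c.re, c.im, by simp [real_smul, re_add_im]⟩
  have hIc : I * (a • (1 : ℂ) + b • I) = (-b) • (1 : ℂ) + a • I := by
    simp only [real_smul]
    push_cast
    linear_combination (b : ℂ) * I_sq
  rw [hIc, map_add, map_add, L.map_smul, L.map_smul, L.map_smul, L.map_smul]
  simp only [real_smul, map_add, map_mul, conj_ofReal, conj_I, map_one]
  push_cast
  linear_combination (b : ℂ) * L I * I_sq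

theorem continuous_dbar {g : ℂ → ℂ} (hg : ContDiff ℝ 1 g) : Continuous (dbar g) := by
  have hD := hg.continuous_fderiv one_ne_zero
  exact (hD.clm_apply continuous_const).add (continuous_const.mul (hD.clm_apply continuous_const))

theorem HasCompactSupport.dbar {g : ℂ → ℂ} (hg : HasCompactSupport g) :
    HasCompactSupport (dbar g) :=
  HasCompactSupport.intro hg fun w hw => by
    simp [_root_.dbar, fderiv_of_notMem_tsupport (𝕜 := ℝ) hw]

section Polar

variable {g : ℂ → ℂ}

theorem smul_dbar_div_polar (r θ : ℝ) (hr : r ≠ 0) :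
    r • (dbar g (r * exp (θ * I)) / (r * exp (θ * I))) =
      fderiv ℝ g (r * exp (θ * I)) (exp (θ * I)) +
        I * fderiv ℝ g (r * exp (θ * I)) (I * exp (θ * I)) := by
  rw [ContinuousLinearMap.apply_add_I_mul_apply_I_mul, dbar, ← exp_conj, map_mul, conj_ofReal,
    conj_I, mul_neg, exp_neg, real_smul]
  have : (r : ℂ) ≠ 0 := by exact_mod_cast hr
  field_simp

theorem hasDerivAt_comp_ofReal_mul_exp (hg : Differentiable ℝ g) (r θ : ℝ) :
    HasDerivAt (fun t : ℝ => g (t * exp (θ * I))) (fderiv ℝ g (r * exp (θ * I)) (exp (θ * I))) r :=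
  (hg _).hasFDerivAt.comp_hasDerivAt r (by
    simpa using ((hasDerivAt_id (r : ℂ)).mul_const (exp (θ * I))).comp_ofReal)

theorem hasDerivAt_comp_mul_exp_ofReal_mul_I (hg : Differentiable ℝ g) (r θ : ℝ) :
    HasDerivAt (fun t : ℝ => g (r * exp (t * I)))
      (r • fderiv ℝ g (r * exp (θ * I)) (I * exp (θ * I))) θ := by
  have h : HasDerivAt (fun t : ℝ => (r : ℂ) * exp (t * I)) ((r : ℝ) • (I * exp (θ * I))) θ := by
    simpa [real_smul, mul_comm I, mul_assoc] using
      ((((hasDerivAt_id (θ : ℂ)).mul_const I).cexp).comp_ofReal).const_mul (r : ℂ)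
  rw [← map_smul]
  exact (hg _).hasFDerivAt.comp_hasDerivAt θ h

variable {R : ℝ}

theorem setIntegral_radial_fderiv (hg : ContDiff ℝ 1 g) (hR : tsupport g ⊆ ball 0 R) (hR0 : 0 < R) :
    ∫ p in Ioc 0 R ×ˢ Ioo (-π) π, fderiv ℝ g (p.1 * exp (p.2 * I)) (exp (p.2 * I)) =
      -(2 * π) * g 0 := by
  have hD := hg.continuous_fderiv one_ne_zero
  have hcont : Continuous fun p : ℝ × ℝ => fderiv ℝ g (p.1 * exp (p.2 * I)) (exp (p.2 * I)) := by
    fun_prop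
  have hinner (θ : ℝ) : ∫ r in Ioc 0 R, fderiv ℝ g (r * exp (θ * I)) (exp (θ * I)) = -g 0 := by
    have hgR : g (R * exp (θ * I)) = 0 := image_eq_zero_of_notMem_tsupport fun h => by
      simpa [norm_exp_ofReal_mul_I, abs_of_pos hR0] using hR h
    rw [← intervalIntegral.integral_of_le hR0.le, intervalIntegral.integral_eq_sub_of_hasDerivAt
      (fun r _ => hasDerivAt_comp_ofReal_mul_exp (hg.differentiable one_ne_zero) r θ)
      ((hcont.comp (Continuous.prodMk_left θ)).intervalIntegrable _ _)]
    simp [hgR]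
  rw [Measure.volume_eq_prod, ← setIntegral_prod_swap, setIntegral_prod]
  · simp only [Prod.swap_prod_mk]
    rw [setIntegral_congr_fun measurableSet_Ioo fun θ _ => hinner θ, setIntegral_const,
      Real.volume_real_Ioo_of_le (by linarith [Real.pi_pos]), real_smul]
    push_cast
    ring
  · exact ((hcont.comp continuous_swap).continuousOn.integrableOn_compact
      (isCompact_Icc.prod isCompact_Icc)).mono_set
      (prod_mono Ioo_subset_Icc_self Ioc_subset_Icc_self)

theorem setIntegral_angular_fderiv_eq_zero (hg : ContDiff ℝ 1 g) :
    ∫ p in Ioc 0 R ×ˢ Ioo (-π) π, I * fderiv ℝ g (p.1 * exp (p.2 * I)) (I * exp (p.2 * I)) = 0 := by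
  have hD := hg.continuous_fderiv one_ne_zero
  have hcont :
      Continuous fun p : ℝ × ℝ => fderiv ℝ g (p.1 * exp (p.2 * I)) (I * exp (p.2 * I)) := by
    fun_prop
  have hinner (r : ℝ) (hr : r ∈ Ioc 0 R) :
      ∫ θ in Ioo (-π) π, I * fderiv ℝ g (r * exp (θ * I)) (I * exp (θ * I)) = 0 := by
    have hr0 : (r : ℂ) ≠ 0 := by exact_mod_cast hr.1.ne'
    have hperiod : g (r * exp (π * I)) - g (r * exp ((-π : ℝ) * I)) = 0 := by
      simp [exp_pi_mul_I, exp_neg]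
    calc ∫ θ in Ioo (-π) π, I * fderiv ℝ g (r * exp (θ * I)) (I * exp (θ * I))
        = I / r * ∫ θ in (-π)..π, r • fderiv ℝ g (r * exp (θ * I)) (I * exp (θ * I)) := by
          rw [intervalIntegral.integral_of_le (by linarith [Real.pi_pos]),
            integral_Ioc_eq_integral_Ioo, ← integral_const_mul]
          congr 1 with θ
          rw [real_smul]
          field_simp
      _ = 0 := by
          rw [intervalIntegral.integral_eq_sub_of_hasDerivAt
            (fun θ _ => hasDerivAt_comp_mul_exp_ofReal_mul_I (hg.differentiable one_ne_zero) r θ)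
            ((by fun_prop : Continuous _).intervalIntegrable _ _),
            hperiod, mul_zero]
  rw [Measure.volume_eq_prod, setIntegral_prod]
  · rw [setIntegral_congr_fun measurableSet_Ioc hinner, integral_zero]
  · exact ((continuous_const.mul hcont).continuousOn.integrableOn_compact
      (isCompact_Icc.prod isCompact_Icc)).mono_set
      (prod_mono Ioc_subset_Icc_self Ioo_subset_Icc_self)

theorem integral_dbar_div_eq_integral_polar (hR : tsupport g ⊆ ball 0 R) :
    ∫ w, dbar g w / w = ∫ p in Ioc 0 R ×ˢ Ioo (-π) π,
      (fderiv ℝ g (p.1 * exp (p.2 * I)) (exp (p.2 * I)) +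
        I * fderiv ℝ g (p.1 * exp (p.2 * I)) (I * exp (p.2 * I))) := by
  have hsymm (p : ℝ × ℝ) : Complex.polarCoord.symm p = p.1 * exp (p.2 * I) := by
    simp [exp_mul_I]
  rw [← Complex.integral_comp_polarCoord_symm, _root_.polarCoord_target,
    setIntegral_eq_of_subset_of_forall_sdiff_eq_zero (measurableSet_Ioi.prod measurableSet_Ioo)
      (prod_mono Ioc_subset_Ioi_self subset_rfl)]
  · refine setIntegral_congr_fun (measurableSet_Ioc.prod measurableSet_Ioo) fun p hp => ?_
    rw [hsymm, smul_dbar_div_polar _ _ hp.1.1.ne']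
  · rintro p ⟨⟨hp0, hpθ⟩, hpS⟩
    have hRp : R < p.1 := lt_of_not_ge fun h => hpS ⟨⟨hp0, h⟩, hpθ⟩
    have hp : (Complex.polarCoord.symm p : ℂ) ∉ tsupport g := fun h => by
      have := hR h
      rw [hsymm, mem_ball_zero_iff, norm_mul, norm_exp_ofReal_mul_I, norm_real, Real.norm_eq_abs,
        abs_of_pos hp0, mul_one] at this
      linarith
    rw [dbar, fderiv_of_notMem_tsupport (𝕜 := ℝ) hp]
    simp

theorem integral_dbar_div_self (hg : ContDiff ℝ 1 g) (hgs : HasCompactSupport g) :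
    ∫ w, dbar g w / w = -(2 * π) * g 0 := by
  obtain ⟨R, hR0, hR⟩ := hgs.isBounded.subset_ball_lt 0 0
  have hD := hg.continuous_fderiv one_ne_zero
  rw [integral_dbar_div_eq_integral_polar hR, integral_add, setIntegral_radial_fderiv hg hR hR0,
    setIntegral_angular_fderiv_eq_zero hg, add_zero]
  all_goals exact ((Continuous.continuousOn (by fun_prop)).integrableOn_compact
    (isCompact_Icc.prod isCompact_Icc)).mono_set (prod_mono Ioc_subset_Icc_self Ioo_subset_Icc_self)

end Polar

theorem integral_dbar_div_sub (g : ℂ → ℂ) (hg : ContDiff ℝ 1 g) (hgs : HasCompactSupport g)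
    (z : ℂ) : ∫ w, dbar g w / (w - z) = -(2 * π) * g z := by
  calc ∫ w, dbar g w / (w - z)
      = ∫ w, dbar (fun w => g (z + w)) w / w := by
        rw [← integral_add_left_eq_self (μ := volume) z (f := fun w => dbar g w / (w - z))]
        simp [dbar_comp_const_add]
    _ = -(2 * π) * g z := by
        simpa using integral_dbar_div_self (g := fun w => g (z + w))
          (hg.comp (contDiff_const.add contDiff_id)) (hgs.comp_homeomorph (Homeomorph.addLeft z))

theorem continuous_uncurry_div_sub {K : Set ℂ} {q : ℂ → ℂ} (hq : Continuous q)
    (hqK : ∀ᶠ w in 𝓝ˢ K, q w = 0) :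
    Continuous fun p : ℂ × K => q p.1 / (p.1 - p.2) := by
  refine continuous_iff_continuousAt.mpr fun p => ?_
  by_cases hp : p.1 ∈ K
  · refine (continuousAt_const (y := (0 : ℂ))).congr (Filter.EventuallyEq.symm ?_)
    have : ∀ᶠ w in 𝓝 p.1, q w = 0 := hqK.filter_mono (nhds_le_nhdsSet hp)
    filter_upwards [continuousAt_fst.eventually this] with x hx
    simp [hx]
  · refine (hq.comp continuous_fst).continuousAt.div (by fun_prop) ?_
    exact sub_ne_zero.mpr fun h => hp (h ▸ p.2.2)

section Pole

variable {K : Set ℂ} [CompactSpace K]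

theorem exists_mem_closure_polynomialFunctions_eq_inv_sub (hconn : IsPreconnected Kᶜ) {w : ℂ}
    (hw : w ∉ K) :
    ∃ u ∈ (polynomialFunctions K).topologicalClosure, ∀ z : K, u z = (w - z)⁻¹ := by
  set B := (polynomialFunctions K).topologicalClosure
  have : IsClosed (B : Set C(K, ℂ)) := Subalgebra.isClosed_topologicalClosure _
  let x : B := ⟨X.toContinuousMapOn K, Subalgebra.le_topologicalClosure _ ⟨X, trivial, rfl⟩⟩
  have hσ : spectrum ℂ (x : C(K, ℂ)) = K := by
    rw [ContinuousMap.spectrum_eq_range]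
    simp [x, toContinuousMapOn, Polynomial.toContinuousMap]
  have hunit : IsUnit (algebraMap ℂ B w - x) := by
    rw [← spectrum.notMem_iff, Subalgebra.spectrum_eq_of_isPreconnected_compl B x (by rwa [hσ]), hσ]
    exact hw
  refine ⟨(hunit.unit⁻¹ : Bˣ), SetLike.coe_mem _, fun z => ?_⟩
  have h : ((hunit.unit⁻¹ : Bˣ) : C(K, ℂ)) * (algebraMap ℂ _ w - X.toContinuousMapOn K) = 1 :=
    congrArg Subtype.val hunit.val_inv_mul
  refine eq_inv_of_mul_eq_one_left ?_
  simpa [toContinuousMapOn, Polynomial.toContinuousMap] using congrArg (· z) h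

theorem restrict_mem_closure_polynomialFunctions (hconn : IsPreconnected Kᶜ) {g : ℂ → ℂ}
    (hg : ContDiff ℝ 1 g) (hgs : HasCompactSupport g)
    (hhol : ∀ᶠ w in 𝓝ˢ K, DifferentiableAt ℂ g w) :
    (⟨g, hg.continuous⟩ : C(ℂ, ℂ)).restrict K ∈ (polynomialFunctions K).topologicalClosure := by
  set B := (polynomialFunctions K).topologicalClosure
  have hB : IsClosed (B : Set C(K, ℂ)) := Subalgebra.isClosed_topologicalClosure _
  have hq : ∀ᶠ w in 𝓝ˢ K, dbar g w = 0 := hhol.mono fun w => dbar_eq_zero_of_differentiableAt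
  let Φ : C(ℂ, C(K, ℂ)) :=
    (ContinuousMap.mk _ (continuous_uncurry_div_sub (continuous_dbar hg) hq)).curry
  have hΦ0 {w : ℂ} (hw : dbar g w = 0) : Φ w = 0 := by ext z; simp [Φ, hw]
  have hΦ : Integrable Φ := Φ.continuous.integrable_of_hasCompactSupport
    (hgs.dbar.mono fun w hw h0 => hw (hΦ0 h0))
  have hmem (w : ℂ) : Φ w ∈ B := by
    by_cases hw : w ∈ K
    · rw [hΦ0 (hq.self_of_nhdsSet w hw)]
      exact B.zero_mem
    · obtain ⟨u, hu, hu'⟩ := exists_mem_closure_polynomialFunctions_eq_inv_sub hconn hw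
      have : Φ w = dbar g w • u := by ext z; simp [Φ, hu', div_eq_mul_inv]
      exact this ▸ B.smul_mem hu _
  have hint : ∫ w, Φ w ∈ B :=
    integral_mem_of_forall_mem (S := B.toSubmodule.restrictScalars ℝ) hB hmem
  have hrepr : (⟨g, hg.continuous⟩ : C(ℂ, ℂ)).restrict K = (-(2 * π) : ℂ)⁻¹ • ∫ w, Φ w := by
    ext z
    rw [ContinuousMap.smul_apply, ContinuousMap.integral_apply hΦ]
    simp only [Φ, ContinuousMap.curry_apply, ContinuousMap.coe_mk]
    rw [integral_dbar_div_sub g hg hgs, smul_eq_mul]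
    field_simp
    rfl
  exact hrepr ▸ B.smul_mem hint _

theorem exists_tendstoUniformlyOn_of_mem_closure_polynomialFunctions {f : ℂ → ℂ} {F : C(K, ℂ)}
    (hF : F ∈ (polynomialFunctions K).topologicalClosure)
    (hFf : ∀ z : K, F z = f z) :
    ∃ p : ℕ → ℂ[X], TendstoUniformlyOn (fun n z => (p n).eval z) f atTop K := by
  obtain ⟨u, hu, hlim⟩ := mem_closure_iff_seq_limit.mp hF
  choose p _ hp using fun n => hu n
  refine ⟨p, ?_⟩
  rw [tendstoUniformlyOn_iff_tendstoUniformly_comp_coe]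
  have hu' : ∀ n (z : K), u n z = (p n).eval (z : ℂ) := fun n z => by rw [← hp n]; rfl
  have hF' : ⇑F = f ∘ Subtype.val := funext hFf
  simpa [hu', hF'] using ContinuousMap.tendsto_iff_tendstoUniformly.mp hlim

end Pole

/-- **Runge's theorem.** Let `K ⊆ ℂ` be compact with `ℂ \ K` connected. Then for every
function `f` holomorphic on an open neighborhood `U` of `K` there exists a sequence of
holomorphic polynomials converging uniformly on `K` to `f`. -/
theorem runge_theorem (K : Set ℂ) (hK : IsCompact K) (hconn : IsConnected Kᶜ)
    (f : ℂ → ℂ) (U : Set ℂ) (hU : IsOpen U) (hKU : K ⊆ U)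
    (hf : DifferentiableOn ℂ f U) :
    ∃ p : ℕ → Polynomial ℂ,
      TendstoUniformlyOn (fun n z => (p n).eval z) f atTop K := by
  have : CompactSpace K := isCompact_iff_compactSpace.mp hK
  obtain ⟨g, hg, hgs, hgf⟩ := exists_contDiff_hasCompactSupport_eventuallyEq (n := 1) hK hU hKU
    ((hf.contDiffOn hU).restrict_scalars ℝ)
  have hhol : ∀ᶠ w in 𝓝ˢ K, DifferentiableAt ℂ g w := by
    filter_upwards [hgf.eventually_nhdsSet, hU.mem_nhdsSet.mpr hKU] with w hw hwU
    exact (hf.differentiableAt (hU.mem_nhds hwU)).congr_of_eventuallyEq hw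
  exact exists_tendstoUniformlyOn_of_mem_closure_polynomialFunctions
    (restrict_mem_closure_polynomialFunctions hconn.isPreconnected hg hgs hhol)
    fun z => hgf.self_of_nhdsSet z.2
end

section
/- Let f be continuous on the closed unit disk 𝔻̄ = {z ∈ ℂ : |z| ≤ 1} and let R > 1. Then limsup_{n→∞} d_n(f,𝔻̄)^{1/n} ≤ 1/R if and only if f is the restriction to 𝔻̄ of a function holomorphic in the disk {z ∈ ℂ : |z| < R}. -/
open Filter

/-- The supremum norm `‖g‖_K = sup_{z ∈ K} |g z|` for `K ⊆ ℂ`. -/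
noncomputable def supC (K : Set ℂ) (g : ℂ → ℂ) : ℝ :=
  ⨆ z : K, ‖g z‖

/-- `d_n(f,K)`: distance from `f` to the holomorphic polynomials of degree at most `n`
in the supremum norm on `K`. -/
noncomputable def dnApprox (K : Set ℂ) (f : ℂ → ℂ) (n : ℕ) : ℝ :=
  ⨅ p : {p : Polynomial ℂ // p.natDegree ≤ n}, supC K (fun z => f z - p.1.eval z)

/-!
Backward direction: if `f` extends holomorphically to the disk of radius `R`, the partial sums of
its Taylor series at `0` approximate it on `𝔻̄` with error `O(r⁻ⁿ)` for every `r < R`.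

Forward direction: near-best approximants `Pₙ` satisfy `‖f - Pₙ‖ = O(rⁿ)` on `𝔻̄` for every
`r > 1/R`, so `Pₙ₊₁ - Pₙ` is `O(rⁿ)` on the unit circle. The Cauchy estimates bound its
coefficients by the same quantity, hence it is `O(n (rρ)ⁿ)` on the disk of radius `ρ`, and
`P₀ + ∑ (Pₙ₊₁ - Pₙ)` converges locally uniformly on the disk of radius `R` to a holomorphic
function, which agrees with `f` on `𝔻̄`.
-/

open Metric Polynomial Topology Set

section SupNorm

variable {K : Set ℂ} {g f : ℂ → ℂ}

lemma supC_nonneg (K : Set ℂ) (g : ℂ → ℂ) : 0 ≤ supC K g :=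
  Real.iSup_nonneg fun _ => norm_nonneg _

lemma supC_le (hK : K.Nonempty) {M : ℝ} (h : ∀ z ∈ K, ‖g z‖ ≤ M) : supC K g ≤ M :=
  have := hK.to_subtype
  ciSup_le fun z => h z z.2

lemma norm_le_supC (hK : IsCompact K) (hg : ContinuousOn g K) {z : ℂ} (hz : z ∈ K) :
    ‖g z‖ ≤ supC K g := by
  have hbdd := (hK.image_of_continuousOn hg.norm).bddAbove
  rw [image_eq_range] at hbdd
  exact le_ciSup hbdd ⟨z, hz⟩

instance (n : ℕ) : Nonempty {p : ℂ[X] // p.natDegree ≤ n} :=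
  ⟨⟨0, by simp⟩⟩

lemma dnApprox_nonneg (K : Set ℂ) (f : ℂ → ℂ) (n : ℕ) : 0 ≤ dnApprox K f n :=
  le_ciInf fun _ => supC_nonneg _ _

lemma dnApprox_le_supC {n : ℕ} {p : ℂ[X]} (hp : p.natDegree ≤ n) :
    dnApprox K f n ≤ supC K fun z => f z - p.eval z :=
  ciInf_le ⟨0, by rintro _ ⟨q, rfl⟩; exact supC_nonneg K _⟩
    (⟨p, hp⟩ : {p : ℂ[X] // p.natDegree ≤ n})

lemma dnApprox_le_supC_self (n : ℕ) : dnApprox K f n ≤ supC K f := by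
  simpa using dnApprox_le_supC (K := K) (f := f) (p := 0) (n := n) (by simp)

lemma exists_supC_lt_dnApprox_add (K : Set ℂ) (f : ℂ → ℂ) (n : ℕ) {ε : ℝ} (hε : 0 < ε) :
    ∃ p : ℂ[X], p.natDegree ≤ n ∧ supC K (fun z => f z - p.eval z) < dnApprox K f n + ε := by
  obtain ⟨⟨p, hp⟩, hlt⟩ := exists_lt_of_ciInf_lt (lt_add_of_pos_right (dnApprox K f n) hε)
  exact ⟨p, hp, hlt⟩

end SupNorm

namespace Polynomial

lemma iteratedDeriv_eval (q : ℂ[X]) (k : ℕ) :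
    iteratedDeriv k (fun z => q.eval z) = fun z => (derivative^[k] q).eval z := by
  induction k with
  | zero => rfl
  | succ k ih =>
    ext z
    rw [iteratedDeriv_succ, ih, Polynomial.deriv, Function.iterate_succ_apply']

lemma norm_coeff_le_of_forall_mem_sphere {q : ℂ[X]} {M : ℝ}
    (h : ∀ z ∈ sphere (0 : ℂ) 1, ‖q.eval z‖ ≤ M) (k : ℕ) : ‖q.coeff k‖ ≤ M := by
  have hcauchy := Complex.norm_iteratedDeriv_le_of_forall_mem_sphere_norm_le k one_pos
    q.differentiable.diffContOnCl h
  have hderiv : iteratedDeriv k (fun z => q.eval z) 0 = k.factorial * q.coeff k := by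
    rw [iteratedDeriv_eval]
    dsimp only
    rw [← coeff_zero_eq_eval_zero, coeff_iterate_derivative, zero_add,
      Nat.descFactorial_self, nsmul_eq_mul]
  rw [hderiv, norm_mul, Complex.norm_natCast, one_pow, div_one] at hcauchy
  exact le_of_mul_le_mul_left hcauchy (by positivity)

lemma norm_eval_le_of_forall_mem_sphere {q : ℂ[X]} {m : ℕ} (hq : q.natDegree ≤ m) {M ρ : ℝ}
    (h : ∀ z ∈ sphere (0 : ℂ) 1, ‖q.eval z‖ ≤ M) (hρ : 1 ≤ ρ) {z : ℂ} (hz : ‖z‖ ≤ ρ) :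
    ‖q.eval z‖ ≤ (m + 1) * M * ρ ^ m := by
  have hcoeff := norm_coeff_le_of_forall_mem_sphere h
  rw [eval_eq_sum_range' (Nat.lt_succ_of_le hq)]
  calc ‖∑ i ∈ Finset.range (m + 1), q.coeff i * z ^ i‖
      ≤ ∑ i ∈ Finset.range (m + 1), ‖q.coeff i * z ^ i‖ := norm_sum_le _ _
    _ ≤ ∑ _i ∈ Finset.range (m + 1), M * ρ ^ m := by
        refine Finset.sum_le_sum fun i hi => ?_
        rw [norm_mul, norm_pow]
        have hzi : ‖z‖ ^ i ≤ ρ ^ m := (pow_le_pow_left₀ (norm_nonneg z) hz i).trans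
          (pow_le_pow_right₀ hρ (Nat.lt_succ_iff.1 (Finset.mem_range.1 hi)))
        exact mul_le_mul (hcoeff i) hzi (by positivity) ((norm_nonneg _).trans (hcoeff 0))
    _ = (m + 1) * M * ρ ^ m := by
        rw [Finset.sum_const, Finset.card_range, nsmul_eq_mul]
        push_cast
        ring

end Polynomial

section RootTest

variable {d : ℕ → ℝ}

lemma limsup_rpow_inv_le_of_le_mul_pow (hd : ∀ n, 0 ≤ d n) {C t : ℝ} (hC : 0 < C) (ht : 0 ≤ t)
    (hb : ∀ n, d n ≤ C * t ^ n) : limsup (fun n : ℕ => d n ^ (n : ℝ)⁻¹) atTop ≤ t := by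
  have hroot : Tendsto (fun n : ℕ => C ^ (n : ℝ)⁻¹ * t) atTop (𝓝 t) := by
    have h := ((Real.continuousAt_const_rpow hC.ne').tendsto.comp
      (tendsto_inv_atTop_zero.comp tendsto_natCast_atTop_atTop)).mul_const t
    simpa using h
  have hle : (fun n : ℕ => d n ^ (n : ℝ)⁻¹) ≤ᶠ[atTop] fun n => C ^ (n : ℝ)⁻¹ * t := by
    filter_upwards [eventually_ne_atTop 0] with n hn
    calc d n ^ (n : ℝ)⁻¹ ≤ (C * t ^ n) ^ (n : ℝ)⁻¹ :=
          Real.rpow_le_rpow (hd n) (hb n) (by positivity)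
      _ = C ^ (n : ℝ)⁻¹ * t := by
          rw [Real.mul_rpow hC.le (by positivity), Real.pow_rpow_inv_natCast ht hn]
  refine (limsup_le_limsup hle ?_ hroot.isBoundedUnder_le).trans_eq hroot.limsup_eq
  exact isCoboundedUnder_le_of_le atTop fun n => Real.rpow_nonneg (hd n) _

lemma eventually_lt_pow_of_limsup_rpow_inv_lt (hd : ∀ n, 0 ≤ d n) {M : ℝ} (hM : ∀ n, d n ≤ M)
    {r : ℝ} (h : limsup (fun n : ℕ => d n ^ (n : ℝ)⁻¹) atTop < r) :
    ∀ᶠ n in atTop, d n < r ^ n := by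
  have hbdd : IsBoundedUnder (· ≤ ·) atTop fun n : ℕ => d n ^ (n : ℝ)⁻¹ :=
    isBoundedUnder_of ⟨max 1 M, fun n =>
      calc d n ^ (n : ℝ)⁻¹ ≤ max 1 M ^ (n : ℝ)⁻¹ :=
            Real.rpow_le_rpow (hd n) ((hM n).trans (le_max_right _ _)) (by positivity)
        _ ≤ max 1 M ^ (1 : ℝ) :=
            Real.rpow_le_rpow_of_exponent_le (le_max_left _ _) (Nat.cast_inv_le_one n)
        _ = max 1 M := Real.rpow_one _⟩
  filter_upwards [eventually_lt_of_limsup_lt h hbdd, eventually_ne_atTop 0] with n hn hn0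
  rw [← Real.rpow_inv_natCast_pow (hd n) hn0]
  exact pow_lt_pow_left₀ hn (Real.rpow_nonneg (hd n) _) hn0

end RootTest

lemma tendsto_of_eventually_norm_sub_le_mul_pow {E : Type*} [NormedAddCommGroup E] {u : ℕ → E}
    {a : E} {C r : ℝ} (hr0 : 0 ≤ r) (hr1 : r < 1) (h : ∀ᶠ n in atTop, ‖a - u n‖ ≤ C * r ^ n) :
    Tendsto u atTop (𝓝 a) := by
  rw [tendsto_iff_norm_sub_tendsto_zero]
  have hgeom := (tendsto_pow_atTop_nhds_zero_of_lt_one hr0 hr1).const_mul C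
  rw [mul_zero] at hgeom
  refine squeeze_zero_norm' ?_ hgeom
  filter_upwards [h] with n hn
  rwa [norm_norm, norm_sub_rev]

lemma summable_of_summable_supC {K : Set ℂ} (hK : IsCompact K) {g : ℕ → ℂ → ℂ}
    (hg : ∀ n, ContinuousOn (g n) K) (hs : Summable fun n => supC K (g n)) {z : ℂ}
    (hz : z ∈ K) : Summable fun n => g n z :=
  hs.of_norm_bounded fun n => norm_le_supC hK (hg n) hz

lemma differentiableOn_tsum_of_eventually_summable_supC {g : ℕ → ℂ → ℂ}
    (hg : ∀ n, Differentiable ℂ (g n)) {R : ℝ}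
    (hs : ∀ᶠ ρ in 𝓝[<] R, Summable fun n => supC (closedBall 0 ρ) (g n)) :
    DifferentiableOn ℂ (fun z => ∑' n, g n z) (ball 0 R) := by
  intro z hz
  obtain ⟨ρ, hρ, hzρ, -⟩ := (hs.and (Ioo_mem_nhdsLT (mem_ball_zero_iff.1 hz))).exists
  have hdiff : DifferentiableOn ℂ (fun z => ∑' n, g n z) (ball 0 ρ) :=
    Complex.differentiableOn_tsum_of_summable_norm hρ (fun n => (hg n).differentiableOn)
      isOpen_ball fun n _ hw => norm_le_supC (isCompact_closedBall 0 ρ)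
        (hg n).continuous.continuousOn (ball_subset_closedBall hw)
  exact (hdiff.differentiableAt (isOpen_ball.mem_nhds (mem_ball_zero_iff.2 hzρ)))
    |>.differentiableWithinAt

lemma summable_supC_closedBall_of_eventually_le {q : ℕ → ℂ[X]}
    (hdeg : ∀ n, (q n).natDegree ≤ n + 1) {C r ρ : ℝ} (hr : 0 ≤ r) (hρ : 1 ≤ ρ)
    (hrρ : r * ρ < 1) (h : ∀ᶠ n in atTop, ∀ z ∈ sphere (0 : ℂ) 1, ‖(q n).eval z‖ ≤ C * r ^ n) :
    Summable fun n => supC (closedBall 0 ρ) fun z => (q n).eval z := by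
  have hgeom : Summable fun n : ℕ => C * ρ * (((n : ℝ) + 2) * (r * ρ) ^ n) := by
    have hrρ' : ‖r * ρ‖ < 1 := by rwa [Real.norm_of_nonneg (by positivity)]
    refine (((summable_pow_mul_geometric_of_norm_lt_one 1 hrρ').add
      ((summable_geometric_of_lt_one (by positivity) hrρ).mul_left 2)).mul_left (C * ρ)).congr
      fun n => by ring
  refine hgeom.of_norm_bounded_eventually ?_
  rw [Nat.cofinite_eq_atTop]
  filter_upwards [h] with n hn
  rw [Real.norm_of_nonneg (supC_nonneg _ _)]
  refine supC_le ⟨0, mem_closedBall_self (zero_le_one.trans hρ)⟩ fun z hz => ?_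
  refine (norm_eval_le_of_forall_mem_sphere (hdeg n) hn hρ (by simpa using hz)).trans_eq ?_
  push_cast
  ring

section Forward

variable {g : ℂ → ℂ} {P : ℕ → ℂ[X]} {R : ℝ}

lemma summable_supC_sub_of_eventually_norm_sub_le (hdeg : ∀ n, (P n).natDegree ≤ n)
    (h : ∀ r, R⁻¹ < r → ∃ C, ∀ᶠ n in atTop,
      ∀ z ∈ closedBall (0 : ℂ) 1, ‖g z - (P n).eval z‖ ≤ C * r ^ n)
    {ρ : ℝ} (hρ : 1 ≤ ρ) (hρR : ρ < R) :
    Summable fun n => supC (closedBall 0 ρ) fun z => (P (n + 1) - P n).eval z := by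
  have hρ0 : 0 < ρ := zero_lt_one.trans_le hρ
  obtain ⟨r, hRr, hrρ⟩ := exists_between (inv_strictAnti₀ hρ0 hρR)
  obtain ⟨C, hC⟩ := h r hRr
  refine summable_supC_closedBall_of_eventually_le (C := C * (1 + r))
    (fun n => (natDegree_sub_le _ _).trans (max_le (hdeg _) ((hdeg n).trans n.le_succ)))
    ((inv_pos.2 (hρ0.trans hρR)).le.trans hRr.le) hρ
    ((lt_div_iff₀ hρ0).1 (by rwa [one_div])) ?_
  filter_upwards [hC, (tendsto_add_atTop_nat 1).eventually hC] with n hn hn1 z hz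
  have hz1 : z ∈ closedBall (0 : ℂ) 1 := sphere_subset_closedBall hz
  calc ‖(P (n + 1) - P n).eval z‖ = ‖(g z - (P n).eval z) - (g z - (P (n + 1)).eval z)‖ := by
        rw [eval_sub, sub_sub_sub_cancel_left]
    _ ≤ C * r ^ n + C * r ^ (n + 1) := (norm_sub_le _ _).trans (add_le_add (hn z hz1) (hn1 z hz1))
    _ = C * (1 + r) * r ^ n := by ring

lemma exists_differentiableOn_eqOn_of_eventually_norm_sub_le (hdeg : ∀ n, (P n).natDegree ≤ n)
    (hR : 1 < R) (h : ∀ r, R⁻¹ < r → ∃ C, ∀ᶠ n in atTop,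
      ∀ z ∈ closedBall (0 : ℂ) 1, ‖g z - (P n).eval z‖ ≤ C * r ^ n) :
    ∃ F : ℂ → ℂ, DifferentiableOn ℂ F (ball 0 R) ∧ EqOn F g (closedBall 0 1) := by
  set q : ℕ → ℂ[X] := fun n => P (n + 1) - P n
  have hsum : ∀ᶠ ρ in 𝓝[<] R, Summable fun n => supC (closedBall 0 ρ) fun z => (q n).eval z := by
    filter_upwards [Ioo_mem_nhdsLT hR] with ρ hρ
    exact summable_supC_sub_of_eventually_norm_sub_le hdeg h hρ.1.le hρ.2
  refine ⟨fun z => (P 0).eval z + ∑' n, (q n).eval z,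
    (P 0).differentiable.differentiableOn.add
      (differentiableOn_tsum_of_eventually_summable_supC (fun n => (q n).differentiable) hsum),
    fun z hz => ?_⟩
  obtain ⟨ρ, hρ, hρ1, -⟩ := (hsum.and (Ioo_mem_nhdsLT hR)).exists
  have hqz := summable_of_summable_supC (isCompact_closedBall 0 ρ)
    (fun n => (q n).continuous.continuousOn) hρ (closedBall_subset_closedBall hρ1.le hz)
  have hlim : Tendsto (fun n => (P n).eval z) atTop (𝓝 ((P 0).eval z + ∑' n, (q n).eval z)) := by
    refine (hqz.hasSum.tendsto_sum_nat.const_add ((P 0).eval z)).congr fun n => ?_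
    simp only [q, eval_sub, Finset.sum_range_sub fun n => (P n).eval z, add_sub_cancel]
  obtain ⟨r, hRr, hr1⟩ := exists_between (inv_lt_one_of_one_lt₀ hR)
  obtain ⟨C, hC⟩ := h r hRr
  exact tendsto_nhds_unique hlim <| tendsto_of_eventually_norm_sub_le_mul_pow
    ((inv_pos.2 (zero_lt_one.trans hR)).le.trans hRr.le) hr1 (hC.mono fun n hn => hn z hz)

lemma exists_differentiableOn_eqOn_of_limsup_dnApprox_le {f : ℂ → ℂ}
    (hf : ContinuousOn f (closedBall 0 1)) (hR : 1 < R)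
    (hlim : limsup (fun n : ℕ => dnApprox (closedBall 0 1) f n ^ (n : ℝ)⁻¹) atTop ≤ 1 / R) :
    ∃ F : ℂ → ℂ, DifferentiableOn ℂ F (ball 0 R) ∧ EqOn F f (closedBall 0 1) := by
  set K := closedBall (0 : ℂ) 1
  have hRinv : 0 < R⁻¹ := inv_pos.2 (zero_lt_one.trans hR)
  choose P hdeg hP using fun n => exists_supC_lt_dnApprox_add K f n (pow_pos hRinv n)
  refine exists_differentiableOn_eqOn_of_eventually_norm_sub_le hdeg hR fun r hRr => ⟨2, ?_⟩
  have hdr : ∀ᶠ n in atTop, dnApprox K f n < r ^ n :=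
    eventually_lt_pow_of_limsup_rpow_inv_lt (dnApprox_nonneg K f) dnApprox_le_supC_self
      (hlim.trans_lt (by rwa [one_div]))
  filter_upwards [hdr] with n hn z hz
  calc ‖f z - (P n).eval z‖ ≤ supC K (fun z => f z - (P n).eval z) :=
        norm_le_supC (isCompact_closedBall 0 1) (hf.sub (P n).continuous.continuousOn) hz
    _ ≤ dnApprox K f n + R⁻¹ ^ n := (hP n).le
    _ ≤ 2 * r ^ n := by linarith [pow_le_pow_left₀ hRinv.le hRr.le n]

end Forward

lemma FormalMultilinearSeries.partialSum_eq_eval {𝕜 : Type*} [NontriviallyNormedField 𝕜]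
    (p : FormalMultilinearSeries 𝕜 𝕜 𝕜) (n : ℕ) (z : 𝕜) :
    p.partialSum n z = (∑ k ∈ Finset.range n, C (p.coeff k) * X ^ k).eval z := by
  simp only [FormalMultilinearSeries.partialSum, eval_finsetSum, eval_mul, eval_C, eval_pow, eval_X,
    FormalMultilinearSeries.apply_eq_pow_smul_coeff, smul_eq_mul, mul_comm]

lemma Polynomial.natDegree_sum_range_C_mul_X_pow_le {R : Type*} [Semiring R] (a : ℕ → R)
    (n : ℕ) : (∑ k ∈ Finset.range n, C (a k) * X ^ k).natDegree ≤ n :=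
  natDegree_sum_le_of_forall_le _ _ fun _ hk =>
    (natDegree_C_mul_X_pow_le _ _).trans (Finset.mem_range.1 hk).le

section Backward

variable {f F : ℂ → ℂ} {R : ℝ}

lemma exists_dnApprox_le_of_differentiableOn (hF : DifferentiableOn ℂ F (ball 0 R))
    (hFf : EqOn F f (closedBall 0 1)) {r : ℝ} (hr : 1 < r) (hrR : r < R) :
    ∃ C > 0, ∀ n, dnApprox (closedBall 0 1) f n ≤ C * r⁻¹ ^ n := by
  obtain ⟨R', hrR', hR'R⟩ := exists_between hrR
  lift r to NNReal using zero_le_one.trans hr.le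
  lift R' to NNReal using r.2.trans hrR'.le
  have hps : HasFPowerSeriesOnBall F (cauchyPowerSeries F 0 R') 0 R' :=
    (hF.mono (closedBall_subset_ball hR'R)).hasFPowerSeriesOnBall (r.2.trans_lt hrR')
  obtain ⟨a, ha, C, hC, happrox⟩ :=
    hps.uniform_geometric_approx' (r' := r) (by exact_mod_cast hrR')
  refine ⟨C, hC, fun n => ?_⟩
  have hdeg := natDegree_sum_range_C_mul_X_pow_le (cauchyPowerSeries F 0 R').coeff n
  refine (dnApprox_le_supC hdeg).trans
    (supC_le ⟨0, mem_closedBall_self zero_le_one⟩ fun z hz => ?_)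
  have hz1 : ‖z‖ ≤ 1 := by simpa using hz
  have hFz := happrox z (by simpa using hz1.trans_lt hr) n
  rw [zero_add, hFf hz, FormalMultilinearSeries.partialSum_eq_eval] at hFz
  refine hFz.trans (mul_le_mul_of_nonneg_left
    (pow_le_pow_left₀ (mul_nonneg ha.1.le (by positivity)) ?_ n) hC.le)
  calc a * (‖z‖ / r) ≤ 1 * (1 / r) := by gcongr; exact ha.2.le
    _ = (r : ℝ)⁻¹ := by rw [one_mul, one_div]

lemma limsup_dnApprox_le_of_differentiableOn (hR : 1 < R)
    (hF : DifferentiableOn ℂ F (ball 0 R)) (hFf : EqOn F f (closedBall 0 1)) :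
    limsup (fun n : ℕ => dnApprox (closedBall 0 1) f n ^ (n : ℝ)⁻¹) atTop ≤ 1 / R := by
  rw [one_div]
  refine ge_of_tendsto ((continuousAt_inv₀ (zero_lt_one.trans hR).ne').tendsto.mono_left
    (nhdsWithin_le_nhds (s := Iio R))) ?_
  filter_upwards [Ioo_mem_nhdsLT hR] with r ⟨hr1, hrR⟩
  obtain ⟨C, hC, hb⟩ := exists_dnApprox_le_of_differentiableOn hF hFf hr1 hrR
  exact limsup_rpow_inv_le_of_le_mul_pow (dnApprox_nonneg _ _) hC (by positivity) hb

end Backward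

/-- Let `f` be continuous on the closed unit disk `𝔻̄` and `R > 1`. Then
`limsup_{n→∞} d_n(f,𝔻̄)^{1/n} ≤ 1/R` if and only if `f` is the restriction to `𝔻̄` of a
function holomorphic in the disk of radius `R`. -/
theorem bernstein_walsh_disk (f : ℂ → ℂ)
    (hf : ContinuousOn f (Metric.closedBall (0 : ℂ) 1)) (R : ℝ) (hR : 1 < R) :
    limsup (fun n : ℕ => dnApprox (Metric.closedBall (0 : ℂ) 1) f n ^ ((n : ℝ)⁻¹)) atTop ≤ 1 / R
    ↔ ∃ F : ℂ → ℂ, DifferentiableOn ℂ F (Metric.ball (0 : ℂ) R) ∧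
        Set.EqOn F f (Metric.closedBall (0 : ℂ) 1) :=
  ⟨exists_differentiableOn_eqOn_of_limsup_dnApprox_le hf hR,
    fun ⟨_, hF, hFf⟩ => limsup_dnApprox_le_of_differentiableOn hR hF hFf⟩
end
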